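/- arXiv:1609.04991 — 4 statements merged into one kernel-verified Lean document; each statement's English description precedes it below -/
import Mathlib

section
/- Let 1 ≤ p ≤ r < ∞ and for each k ∈ ℕ let A_k = (a_{ij}^{(k)})_{i,j∈ℕ} be an infinite matrix of non-negative real numbers belonging to ℓ^r(ℓ^p), i.e. ‖A_k‖_{ℓ^r(ℓ^p)} = (Σ_i (Σ_j (a_{ij}^{(k)})^p)^{r/p})^{1/r} < ∞. Assume the matrices have pairwise disjoint supports: a_{ij}^{(k)} · a_{ij}^{(l)} = 0 for all i, j and all k ≠ l. Then the pointwise sum Σ_k A_k satisfies ‖Σ_k A_k‖_{ℓ^r(ℓ^p)} ≤ (Σ_k ‖A_k‖_{ℓ^r(ℓ^p)}^p)^{1/p}. -/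
/-!
Since the supports are disjoint, `(∑ₖ a⁽ᵏ⁾ᵢⱼ)ᵖ = ∑ₖ (a⁽ᵏ⁾ᵢⱼ)ᵖ` entrywise, so with `Sₖ(i) = ∑ⱼ (a⁽ᵏ⁾ᵢⱼ)ᵖ`
and `q = r / p ≥ 1` the left-hand side is `‖∑ₖ Sₖ‖_{ℓ^q}^{1/p}`, while the right-hand side is
`(∑ₖ ‖Sₖ‖_{ℓ^q})^{1/p}`. The estimate is therefore Minkowski's inequality in `ℓ^q` for the
countable family `(Sₖ)`, obtained from the two-term inequality by induction and monotone convergence.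
-/

open scoped ENNReal
open MeasureTheory

theorem tsum_map_of_pairwise_mul_eq_zero {R M κ : Type*} [NonUnitalNonAssocSemiring R]
    [NoZeroDivisors R] [TopologicalSpace R] [AddCommMonoid M] [TopologicalSpace M]
    (φ : R → M) (hφ : φ 0 = 0) {a : κ → R} (ha : Pairwise fun k l => a k * a l = 0) :
    φ (∑' k, a k) = ∑' k, φ (a k) := by
  by_cases hzero : ∀ k, a k = 0
  · simp [hzero, hφ]
  push Not at hzero
  obtain ⟨k₀, hk₀⟩ := hzero
  have hvanish : ∀ k, k ≠ k₀ → a k = 0 := fun k hk =>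
    (mul_eq_zero.1 (ha hk)).resolve_right hk₀
  rw [tsum_eq_single k₀ hvanish, tsum_eq_single k₀ fun k hk => by rw [hvanish k hk, hφ]]

namespace ENNReal

variable {ι κ : Type*} {q : ℝ}

theorem iSup_rpow {β : Sort*} (hq : 0 < q) (g : β → ℝ≥0∞) : (⨆ b, g b) ^ q = ⨆ b, g b ^ q :=
  (monotone_rpow_of_nonneg hq.le).map_iSup_of_continuousAt
    (continuous_rpow_const.continuousAt) (zero_rpow_of_pos hq)

theorem tsum_rpow_add_le (hq : 1 ≤ q) (f g : ι → ℝ≥0∞) :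
    (∑' i, (f i + g i) ^ q) ^ (1 / q) ≤
      (∑' i, f i ^ q) ^ (1 / q) + (∑' i, g i ^ q) ^ (1 / q) := by
  let _ : MeasurableSpace ι := ⊤
  simp_rw [← lintegral_count]
  exact lintegral_Lp_add_le Measurable.of_discrete.aemeasurable
    Measurable.of_discrete.aemeasurable hq

theorem tsum_rpow_finsetSum_le (hq : 1 ≤ q) (f : κ → ι → ℝ≥0∞) (s : Finset κ) :
    (∑' i, (∑ k ∈ s, f k i) ^ q) ^ (1 / q) ≤ ∑ k ∈ s, (∑' i, f k i ^ q) ^ (1 / q) := by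
  have hq0 : 0 < q := zero_lt_one.trans_le hq
  classical
  induction s using Finset.induction_on with
  | empty => simp [zero_rpow_of_pos hq0, hq0]
  | insert k s hk ih =>
    simp only [Finset.sum_insert hk]
    exact (tsum_rpow_add_le hq _ _).trans (add_le_add_right ih _)

theorem tsum_rpow_tsum_le [Countable κ] (hq : 1 ≤ q) (f : κ → ι → ℝ≥0∞) :
    (∑' i, (∑' k, f k i) ^ q) ^ (1 / q) ≤ ∑' k, (∑' i, f k i ^ q) ^ (1 / q) := by
  have hq0 : 0 < q := zero_lt_one.trans_le hq
  let _ : MeasurableSpace ι := ⊤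
  have hmono : Monotone fun (s : Finset κ) (i : ι) => (∑ k ∈ s, f k i) ^ q :=
    fun s t hst i => rpow_le_rpow (Finset.sum_le_sum_of_subset hst) hq0.le
  calc (∑' i, (∑' k, f k i) ^ q) ^ (1 / q)
      = (⨆ s : Finset κ, ∑' i, (∑ k ∈ s, f k i) ^ q) ^ (1 / q) := by
        simp_rw [ENNReal.tsum_eq_iSup_sum (f := fun k => f k _), iSup_rpow hq0,
          ← lintegral_count]
        exact congrArg (· ^ (1 / q)) <| lintegral_iSup_directed
          (fun _ => Measurable.of_discrete.aemeasurable) hmono.directed_le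
    _ = ⨆ s : Finset κ, (∑' i, (∑ k ∈ s, f k i) ^ q) ^ (1 / q) := iSup_rpow (by positivity) _
    _ ≤ ∑' k, (∑' i, f k i ^ q) ^ (1 / q) :=
        iSup_le fun s => (tsum_rpow_finsetSum_le hq f s).trans (ENNReal.sum_le_tsum s)

end ENNReal

theorem disjoint_sum_lr_lp_estimate_general (p r : ℝ) (hp : 1 ≤ p) (hpr : p ≤ r)
    (A : ℕ → ℕ → ℕ → ℝ)
    (hdisj : ∀ k l i j, k ≠ l → A k i j * A l i j = 0) :
    (∑' i, (∑' j, (ENNReal.ofReal (∑' k, A k i j)) ^ p) ^ (r / p)) ^ (1 / r)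
      ≤ (∑' k,
          ((∑' i, (∑' j, (ENNReal.ofReal (A k i j)) ^ p) ^ (r / p)) ^ (1 / r)) ^ p)
          ^ (1 / p) := by
  have hp0 : 0 < p := zero_lt_one.trans_le hp
  set S : ℕ → ℕ → ℝ≥0∞ := fun k i => ∑' j, ENNReal.ofReal (A k i j) ^ p
  have hrow (i : ℕ) : ∑' j, ENNReal.ofReal (∑' k, A k i j) ^ p = ∑' k, S k i := by
    simp_rw [S, tsum_map_of_pairwise_mul_eq_zero (fun x => ENNReal.ofReal x ^ p)
      (by simp [hp0]) fun k l hkl => hdisj k l i _ hkl]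
    exact ENNReal.tsum_comm
  have hexp : 1 / r = 1 / (r / p) * (1 / p) := by field_simp
  calc (∑' i, (∑' j, ENNReal.ofReal (∑' k, A k i j) ^ p) ^ (r / p)) ^ (1 / r)
      = ((∑' i, (∑' k, S k i) ^ (r / p)) ^ (1 / (r / p))) ^ (1 / p) := by
        simp_rw [hrow, hexp, ENNReal.rpow_mul]
    _ ≤ (∑' k, (∑' i, S k i ^ (r / p)) ^ (1 / (r / p))) ^ (1 / p) := by
        gcongr
        exact ENNReal.tsum_rpow_tsum_le ((one_le_div hp0).2 hpr) S
    _ = _ := by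
        congr 1
        refine tsum_congr fun k => ?_
        rw [← ENNReal.rpow_mul, hexp, mul_assoc, one_div_mul_cancel hp0.ne', mul_one]

/-- For `1 ≤ p ≤ r < ∞`, if the non-negative matrices `A k ∈ ℓʳ(ℓᵖ)` have pairwise
disjoint supports, then `‖∑ₖ A k‖_{ℓʳ(ℓᵖ)} ≤ (∑ₖ ‖A k‖_{ℓʳ(ℓᵖ)}^p)^{1/p}`. -/
theorem disjoint_sum_lr_lp_estimate (p r : ℝ) (hp : 1 ≤ p) (hpr : p ≤ r)
    (A : ℕ → ℕ → ℕ → ℝ)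
    (hnonneg : ∀ k i j, 0 ≤ A k i j)
    (hdisj : ∀ k l i j, k ≠ l → A k i j * A l i j = 0)
    (hfin : ∀ k,
      (∑' i, (∑' j, (ENNReal.ofReal (A k i j)) ^ p) ^ (r / p)) ^ (1 / r) ≠ ∞) :
    (∑' i, (∑' j, (ENNReal.ofReal (∑' k, A k i j)) ^ p) ^ (r / p)) ^ (1 / r)
      ≤ (∑' k,
          ((∑' i, (∑' j, (ENNReal.ofReal (A k i j)) ^ p) ^ (r / p)) ^ (1 / r)) ^ p)
          ^ (1 / p) :=
  disjoint_sum_lr_lp_estimate_general p r hp hpr A hdisj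
end

section
/- Let 1 ≤ p ≤ r < ∞ and a, b, c ≥ 0 be real numbers. Then a ⊞_r (b ⊞_p c) ≤ (a ⊞_r b) ⊞_p c, i.e. (a^r + ((b^p + c^p)^{1/p})^r)^{1/r} ≤ (((a^r + b^r)^{1/r})^p + c^p)^{1/p}. -/
open Real

/-- Two-term Minkowski inequality specialized: `‖(x, u+v)‖_t ≤ ‖(x,u)‖_t + v`. -/
lemma minkowski_two (t x u v : ℝ) (ht : 1 ≤ t) (hx : 0 ≤ x) (hu : 0 ≤ u) (hv : 0 ≤ v) :
    (x ^ t + (u + v) ^ t) ^ (1 / t) ≤ (x ^ t + u ^ t) ^ (1 / t) + v := by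
  have ht0 : 0 < t := lt_of_lt_of_le one_pos ht
  have h := Real.Lp_add_le_of_nonneg (s := (Finset.univ : Finset (Fin 2)))
    (f := ![x, u]) (g := ![0, v]) ht
    (by intro i _; fin_cases i <;> simp [hx, hu]) (by intro i _; fin_cases i <;> simp [hv])
  simp only [Fin.sum_univ_two, Matrix.cons_val_zero, Matrix.cons_val_one, Matrix.head_cons,
    add_zero, zero_add] at h
  rwa [Real.zero_rpow ht0.ne', zero_add, ← Real.rpow_mul hv, mul_one_div_cancel ht0.ne',
    Real.rpow_one] at h

/-- For `1 ≤ p ≤ r < ∞` and non-negative reals `a, b, c`: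
`a ⊞_r (b ⊞_p c) ≤ (a ⊞_r b) ⊞_p c`, where `x ⊞_q y = (x^q + y^q)^{1/q}`. -/
theorem boxplus_assoc_ineq (p r a b c : ℝ) (hp : 1 ≤ p) (hpr : p ≤ r)
    (ha : 0 ≤ a) (hb : 0 ≤ b) (hc : 0 ≤ c) :
    (a ^ r + ((b ^ p + c ^ p) ^ (1 / p)) ^ r) ^ (1 / r)
      ≤ (((a ^ r + b ^ r) ^ (1 / r)) ^ p + c ^ p) ^ (1 / p) := by
  have hp0 : 0 < p := lt_of_lt_of_le one_pos hp
  have hr0 : 0 < r := lt_of_lt_of_le hp0 hpr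
  set t := r / p with hT
  have ht : 1 ≤ t := (one_le_div hp0).2 hpr
  have hbc : (0:ℝ) ≤ b ^ p + c ^ p := by positivity
  have hab : (0:ℝ) ≤ a ^ r + b ^ r := by positivity
  have hApt : (a ^ p) ^ t = a ^ r := by
    rw [← Real.rpow_mul ha, mul_div_cancel₀ _ hp0.ne']
  have hBpt : (b ^ p) ^ t = b ^ r := by
    rw [← Real.rpow_mul hb, mul_div_cancel₀ _ hp0.ne']
  have hBC : ((b ^ p + c ^ p) ^ (1 / p)) ^ r = (b ^ p + c ^ p) ^ t := by
    rw [← Real.rpow_mul hbc, one_div, inv_mul_eq_div]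
  have h1t : 1 / t = p / r := by rw [hT, one_div_div]
  have key := minkowski_two t (a ^ p) (b ^ p) (c ^ p) ht (by positivity) (by positivity)
    (by positivity)
  rw [hApt, hBpt, ← hBC, h1t] at key
  have key2 := Real.rpow_le_rpow (by positivity) key (one_div_pos.2 hp0).le
  have e1 : p / r * (1 / p) = 1 / r := by field_simp
  have e2 : (a ^ r + b ^ r) ^ (p / r) = ((a ^ r + b ^ r) ^ (1 / r)) ^ p := by
    rw [← Real.rpow_mul hab, one_div, inv_mul_eq_div]
  rwa [← Real.rpow_mul (by positivity), e1, e2] at key2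
end

section
/- Let X and Y be normed vector lattices and let 1 ≤ p ≤ r < ∞. Suppose X and Y each satisfy an upper p-estimate with constant 1: for every finite family x_1, …, x_n of pairwise disjoint elements (|x_i| ∧ |x_j| = 0 for i ≠ j), ‖Σ_{i=1}^n x_i‖ ≤ (Σ_{i=1}^n ‖x_i‖^p)^{1/p}. Then the direct sum X ⊕_r Y, i.e. the product X × Y with coordinatewise order and norm ‖(x,y)‖ = (‖x‖^r + ‖y‖^r)^{1/r}, also satisfies an upper p-estimate with constant 1. -/
/-!
The upper `p`-estimates of `X` and `Y`, applied to the disjoint coordinate families, bound the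
two coordinates of `∑ zᵢ` by the `ℓ^p`-norms of `(‖(zᵢ).1‖)ᵢ` and `(‖(zᵢ).2‖)ᵢ`. What remains is
the scalar inequality `‖·‖_{ℓ^r(ℓ^p)} ≤ ‖·‖_{ℓ^p(ℓ^r)}` for `p ≤ r`; after substituting
`cᵢ = aᵢ^p`, `dᵢ = bᵢ^p` it is the triangle inequality of `ℓ^{r/p}` on `ℝ²`, applied to the sum of
the vectors `(cᵢ, dᵢ)`.
-/

theorem Real.rpow_sum_add_rpow_sum_rpow_inv_le {ι : Type*} (t : Finset ι) {s : ℝ} (hs : 1 ≤ s)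
    {c d : ι → ℝ} (hc : ∀ i ∈ t, 0 ≤ c i) (hd : ∀ i ∈ t, 0 ≤ d i) :
    ((∑ i ∈ t, c i) ^ s + (∑ i ∈ t, d i) ^ s) ^ (1 / s)
      ≤ ∑ i ∈ t, (c i ^ s + d i ^ s) ^ (1 / s) := by
  have : Fact (1 ≤ ENNReal.ofReal s) := ⟨ENNReal.one_le_ofReal.mpr hs⟩
  have norm_toLp {u v : ℝ} (hu : 0 ≤ u) (hv : 0 ≤ v) :
      ‖WithLp.toLp (ENNReal.ofReal s) (u, v)‖ = (u ^ s + v ^ s) ^ (1 / s) := by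
    have hs' : (ENNReal.ofReal s).toReal = s := ENNReal.toReal_ofReal (by linarith)
    rw [WithLp.prod_norm_eq_add (by linarith), hs']
    simp [abs_of_nonneg hu, abs_of_nonneg hv]
  calc ((∑ i ∈ t, c i) ^ s + (∑ i ∈ t, d i) ^ s) ^ (1 / s)
      = ‖∑ i ∈ t, WithLp.toLp (ENNReal.ofReal s) (c i, d i)‖ := by
        rw [← WithLp.toLp_sum, ← prod_mk_sum,
          norm_toLp (Finset.sum_nonneg hc) (Finset.sum_nonneg hd)]
    _ ≤ ∑ i ∈ t, ‖WithLp.toLp (ENNReal.ofReal s) (c i, d i)‖ := norm_sum_le _ _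
    _ = ∑ i ∈ t, (c i ^ s + d i ^ s) ^ (1 / s) :=
        Finset.sum_congr rfl fun i hi => norm_toLp (hc i hi) (hd i hi)

theorem Real.Lr_Lp_le_Lp_Lr {ι : Type*} (t : Finset ι) {p r : ℝ} (hp : 0 < p) (hpr : p ≤ r)
    {a b : ι → ℝ} (ha : ∀ i ∈ t, 0 ≤ a i) (hb : ∀ i ∈ t, 0 ≤ b i) :
    (((∑ i ∈ t, a i ^ p) ^ (1 / p)) ^ r + ((∑ i ∈ t, b i ^ p) ^ (1 / p)) ^ r) ^ (1 / r)
      ≤ (∑ i ∈ t, ((a i ^ r + b i ^ r) ^ (1 / r)) ^ p) ^ (1 / p) := by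
  have hs : 1 ≤ r / p := (one_le_div hp).mpr hpr
  have rpow_p_s {x : ℝ} (hx : 0 ≤ x) : (x ^ p) ^ (r / p) = x ^ r := by
    rw [← Real.rpow_mul hx, mul_div_cancel₀ r hp.ne']
  have inv_s_inv_p {x : ℝ} (hx : 0 ≤ x) : (x ^ (1 / (r / p))) ^ (1 / p) = x ^ (1 / r) := by
    rw [← Real.rpow_mul hx]; congr 1; field_simp
  have hA : 0 ≤ ∑ i ∈ t, a i ^ p := Finset.sum_nonneg fun i hi => by have := ha i hi; positivity
  have hB : 0 ≤ ∑ i ∈ t, b i ^ p := Finset.sum_nonneg fun i hi => by have := hb i hi; positivity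
  calc (((∑ i ∈ t, a i ^ p) ^ (1 / p)) ^ r + ((∑ i ∈ t, b i ^ p) ^ (1 / p)) ^ r) ^ (1 / r)
      = (((∑ i ∈ t, a i ^ p) ^ (r / p) + (∑ i ∈ t, b i ^ p) ^ (r / p)) ^ (1 / (r / p)))
          ^ (1 / p) := by
        rw [inv_s_inv_p (by positivity), ← Real.rpow_mul hA, ← Real.rpow_mul hB,
          one_div_mul_eq_div]
    _ ≤ (∑ i ∈ t, ((a i ^ p) ^ (r / p) + (b i ^ p) ^ (r / p)) ^ (1 / (r / p))) ^ (1 / p) := by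
        gcongr
        exact Real.rpow_sum_add_rpow_sum_rpow_inv_le t hs
          (fun i hi => by have := ha i hi; positivity) (fun i hi => by have := hb i hi; positivity)
    _ = (∑ i ∈ t, ((a i ^ r + b i ^ r) ^ (1 / r)) ^ p) ^ (1 / p) := by
        refine congrArg (· ^ (1 / p)) (Finset.sum_congr rfl fun i hi => ?_)
        have hi' : 0 ≤ a i ^ r + b i ^ r := by have := ha i hi; have := hb i hi; positivity
        rw [rpow_p_s (ha i hi), rpow_p_s (hb i hi), ← Real.rpow_mul hi']
        congr 1; field_simp

theorem upper_p_estimate_direct_sum_general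
    {X Y : Type*} [NormedAddCommGroup X] [Lattice X]
    [NormedAddCommGroup Y] [Lattice Y]
    (p r : ℝ) (hp : 1 ≤ p) (hpr : p ≤ r)
    (hX : ∀ (n : ℕ) (x : Fin n → X), (∀ i j, i ≠ j → |x i| ⊓ |x j| = 0) →
      ‖∑ i, x i‖ ≤ (∑ i, ‖x i‖ ^ p) ^ (1 / p))
    (hY : ∀ (n : ℕ) (y : Fin n → Y), (∀ i j, i ≠ j → |y i| ⊓ |y j| = 0) →
      ‖∑ i, y i‖ ≤ (∑ i, ‖y i‖ ^ p) ^ (1 / p)) :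
    ∀ (n : ℕ) (z : Fin n → X × Y),
      (∀ i j, i ≠ j → |(z i).1| ⊓ |(z j).1| = 0 ∧ |(z i).2| ⊓ |(z j).2| = 0) →
      (‖(∑ i, z i).1‖ ^ r + ‖(∑ i, z i).2‖ ^ r) ^ (1 / r)
        ≤ (∑ i, ((‖(z i).1‖ ^ r + ‖(z i).2‖ ^ r) ^ (1 / r)) ^ p) ^ (1 / p) := by
  intro n z hz
  have hr : 0 ≤ r := by linarith
  have hfst : ‖(∑ i, z i).1‖ ≤ (∑ i, ‖(z i).1‖ ^ p) ^ (1 / p) := by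
    simpa only [Prod.fst_sum] using hX n (fun i => (z i).1) fun i j h => (hz i j h).1
  have hsnd : ‖(∑ i, z i).2‖ ≤ (∑ i, ‖(z i).2‖ ^ p) ^ (1 / p) := by
    simpa only [Prod.snd_sum] using hY n (fun i => (z i).2) fun i j h => (hz i j h).2
  calc (‖(∑ i, z i).1‖ ^ r + ‖(∑ i, z i).2‖ ^ r) ^ (1 / r)
      ≤ (((∑ i, ‖(z i).1‖ ^ p) ^ (1 / p)) ^ r + ((∑ i, ‖(z i).2‖ ^ p) ^ (1 / p)) ^ r)
          ^ (1 / r) := by gcongr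
    _ ≤ _ := Real.Lr_Lp_le_Lp_Lr _ (by linarith) hpr (fun i _ => norm_nonneg _)
          fun i _ => norm_nonneg _

/-- If normed vector lattices `X` and `Y` both satisfy an upper `p`-estimate with
constant 1 and `1 ≤ p ≤ r < ∞`, then the direct sum `X ⊕_r Y` (the product with
coordinatewise order and norm `‖(x,y)‖ = (‖x‖^r + ‖y‖^r)^{1/r}`) also satisfies an
upper `p`-estimate with constant 1. -/
theorem upper_p_estimate_direct_sum
    {X Y : Type*} [NormedAddCommGroup X] [Lattice X] [HasSolidNorm X] [IsOrderedAddMonoid X]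
    [NormedAddCommGroup Y] [Lattice Y] [HasSolidNorm Y] [IsOrderedAddMonoid Y]
    [Module ℝ X] [Module ℝ Y]
    (p r : ℝ) (hp : 1 ≤ p) (hpr : p ≤ r)
    (hX : ∀ (n : ℕ) (x : Fin n → X), (∀ i j, i ≠ j → |x i| ⊓ |x j| = 0) →
      ‖∑ i, x i‖ ≤ (∑ i, ‖x i‖ ^ p) ^ (1 / p))
    (hY : ∀ (n : ℕ) (y : Fin n → Y), (∀ i j, i ≠ j → |y i| ⊓ |y j| = 0) →
      ‖∑ i, y i‖ ≤ (∑ i, ‖y i‖ ^ p) ^ (1 / p)) :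
    ∀ (n : ℕ) (z : Fin n → X × Y),
      (∀ i j, i ≠ j → |(z i).1| ⊓ |(z j).1| = 0 ∧ |(z i).2| ⊓ |(z j).2| = 0) →
      (‖(∑ i, z i).1‖ ^ r + ‖(∑ i, z i).2‖ ^ r) ^ (1 / r)
        ≤ (∑ i, ((‖(z i).1‖ ^ r + ‖(z i).2‖ ^ r) ^ (1 / r)) ^ p) ^ (1 / p) :=
  upper_p_estimate_direct_sum_general p r hp hpr hX hY
end

section
/- Let X and Y be normed vector lattices and let 1 ≤ r ≤ q < ∞. Suppose X and Y each satisfy a lower q-estimate with constant 1: for every finite family x_1, …, x_n of pairwise disjoint elements (|x_i| ∧ |x_j| = 0 for i ≠ j), ‖Σ_{i=1}^n x_i‖ ≥ (Σ_{i=1}^n ‖x_i‖^q)^{1/q}. Then the direct sum X ⊕_r Y, i.e. the product X × Y with coordinatewise order and norm ‖(x,y)‖ = (‖x‖^r + ‖y‖^r)^{1/r}, also satisfies a lower q-estimate with constant 1. -/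
/-!
With `p = q / r ≥ 1`, the `ℓ^q`-norm of the pointwise `ℓ^r`-norms of two nonnegative sequences
`f, g` is the `1/r`-th power of the `ℓ^p`-norm of `f^r + g^r`. Minkowski's inequality in `ℓ^p`
bounds it by the `ℓ^r`-norm of the pair of `ℓ^q`-norms of `f` and `g`. Applied to the coordinate
norms of a disjoint family in `X ⊕_r Y`, the lower `q`-estimates in `X` and `Y` bound the latter
by the norm of the sum.
-/

open Finset

namespace Real

variable {ι : Type*} (s : Finset ι)

theorem sum_rpow_rpow_div_rpow_one_div {c : ι → ℝ} (hc : ∀ i ∈ s, 0 ≤ c i) {r : ℝ} (hr : r ≠ 0)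
    (q : ℝ) :
    (∑ i ∈ s, (c i ^ r) ^ (q / r)) ^ (1 / (q / r)) = ((∑ i ∈ s, c i ^ q) ^ (1 / q)) ^ r := by
  have hsum : ∑ i ∈ s, (c i ^ r) ^ (q / r) = ∑ i ∈ s, c i ^ q :=
    sum_congr rfl fun i hi => by rw [← rpow_mul (hc i hi), mul_div_cancel₀ _ hr]
  rw [hsum, ← rpow_mul (sum_nonneg fun i hi => rpow_nonneg (hc i hi) q), one_div_div,
    one_div_mul_eq_div]

theorem Lq_Lr_le_Lr_Lq_of_nonneg {f g : ι → ℝ} (hf : ∀ i ∈ s, 0 ≤ f i) (hg : ∀ i ∈ s, 0 ≤ g i)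
    {r q : ℝ} (hr : 0 < r) (hrq : r ≤ q) :
    (∑ i ∈ s, ((f i ^ r + g i ^ r) ^ (1 / r)) ^ q) ^ (1 / q) ≤
      (((∑ i ∈ s, f i ^ q) ^ (1 / q)) ^ r + ((∑ i ∈ s, g i ^ q) ^ (1 / q)) ^ r) ^ (1 / r) := by
  have hfr : ∀ i ∈ s, 0 ≤ f i ^ r := fun i hi => rpow_nonneg (hf i hi) r
  have hgr : ∀ i ∈ s, 0 ≤ g i ^ r := fun i hi => rpow_nonneg (hg i hi) r
  have hsum_nonneg : 0 ≤ ∑ i ∈ s, (f i ^ r + g i ^ r) ^ (q / r) :=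
    sum_nonneg fun i hi => rpow_nonneg (add_nonneg (hfr i hi) (hgr i hi)) _
  have hlhs : (∑ i ∈ s, ((f i ^ r + g i ^ r) ^ (1 / r)) ^ q) ^ (1 / q) =
      ((∑ i ∈ s, (f i ^ r + g i ^ r) ^ (q / r)) ^ (1 / (q / r))) ^ (1 / r) := by
    rw [← rpow_mul hsum_nonneg, show 1 / (q / r) * (1 / r) = 1 / q by field_simp]
    refine congrArg (· ^ (1 / q)) (sum_congr rfl fun i hi => ?_)
    rw [← rpow_mul (add_nonneg (hfr i hi) (hgr i hi)), one_div_mul_eq_div]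
  have hminkowski := Lp_add_le_of_nonneg s ((one_le_div hr).2 hrq) hfr hgr
  rw [sum_rpow_rpow_div_rpow_one_div s hf hr.ne', sum_rpow_rpow_div_rpow_one_div s hg hr.ne']
    at hminkowski
  rw [hlhs]
  exact rpow_le_rpow (rpow_nonneg hsum_nonneg _) hminkowski (one_div_nonneg.2 hr.le)

end Real

/-- If normed vector lattices `X` and `Y` both satisfy a lower `q`-estimate with
constant 1 and `1 ≤ r ≤ q < ∞`, then the direct sum `X ⊕_r Y` (the product with
coordinatewise order and norm `‖(x,y)‖ = (‖x‖^r + ‖y‖^r)^{1/r}`) also satisfies a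
lower `q`-estimate with constant 1. -/
theorem lower_q_estimate_direct_sum
    {X Y : Type*} [NormedAddCommGroup X] [Lattice X] [IsOrderedAddMonoid X] [HasSolidNorm X]
    [NormedAddCommGroup Y] [Lattice Y] [IsOrderedAddMonoid Y] [HasSolidNorm Y]
    [Module ℝ X] [Module ℝ Y]
    (r q : ℝ) (hr : 1 ≤ r) (hrq : r ≤ q)
    (hX : ∀ (n : ℕ) (x : Fin n → X), (∀ i j, i ≠ j → |x i| ⊓ |x j| = 0) →
      (∑ i, ‖x i‖ ^ q) ^ (1 / q) ≤ ‖∑ i, x i‖)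
    (hY : ∀ (n : ℕ) (y : Fin n → Y), (∀ i j, i ≠ j → |y i| ⊓ |y j| = 0) →
      (∑ i, ‖y i‖ ^ q) ^ (1 / q) ≤ ‖∑ i, y i‖) :
    ∀ (n : ℕ) (z : Fin n → X × Y),
      (∀ i j, i ≠ j → |(z i).1| ⊓ |(z j).1| = 0 ∧ |(z i).2| ⊓ |(z j).2| = 0) →
      (∑ i, ((‖(z i).1‖ ^ r + ‖(z i).2‖ ^ r) ^ (1 / r)) ^ q) ^ (1 / q)
        ≤ (‖(∑ i, z i).1‖ ^ r + ‖(∑ i, z i).2‖ ^ r) ^ (1 / r) := by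
  intro n z hz
  have hr0 : 0 < r := zero_lt_one.trans_le hr
  have hfst := hX n (fun i => (z i).1) fun i j hij => (hz i j hij).1
  have hsnd := hY n (fun i => (z i).2) fun i j hij => (hz i j hij).2
  rw [← Prod.fst_sum] at hfst
  rw [← Prod.snd_sum] at hsnd
  refine (Real.Lq_Lr_le_Lr_Lq_of_nonneg univ (fun i _ => norm_nonneg _) (fun i _ => norm_nonneg _)
    hr0 hrq).trans (Real.rpow_le_rpow (by positivity) (add_le_add ?_ ?_) (by positivity))
  · exact Real.rpow_le_rpow (by positivity) hfst hr0.le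
  · exact Real.rpow_le_rpow (by positivity) hsnd hr0.le
end
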